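/- arXiv:1706.07431 — 2 statements merged into one kernel-verified Lean document; each statement's English description precedes it below -/
import Mathlib

section
/- With c_1 = 1, the vector Q^{-1} v, where v = (c_2, ..., c_n)^T, equals (m_1, -m_2, m_3, ..., (-1)^{n-2} m_{n-1})^T, i.e. its k-th entry is (-1)^{k+1} m_k for 1 ≤ k ≤ n-1. -/
open Matrix

noncomputable def M0 (c : ℕ → ℂ) (n : ℕ) : Matrix (Fin n) (Fin n) ℂ :=
  fun i j => if (j : ℕ) ≤ (i : ℕ) + 1 then c ((i : ℕ) + 2 - (j : ℕ)) else 0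

noncomputable def pm (c : ℕ → ℂ) (r : ℕ) : ℂ := (M0 c r).det

noncomputable def Qmat (c : ℕ → ℂ) (s : ℕ) : Matrix (Fin s) (Fin s) ℂ :=
  fun i j => if (j : ℕ) ≤ (i : ℕ) then c ((i : ℕ) + 1 - (j : ℕ)) else 0

/-! Expanding the Hessenberg determinant `m_{r+1}` along its last row gives a recurrence saying
that the alternating minors `a_j = (-1)^j m_j` form the convolution inverse of `(c_1, c_2, …)`:
`∑_{j ≤ r} c_{r+1-j} a_j = 0` for `r ≥ 1`. Read row by row, this is exactly `Q w = v` for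
`w_k = -a_{k+1}`, and `Q` is unitriangular. -/

open Finset

lemma Fin.val_succAbove_eq_ite {r : ℕ} (j : Fin (r + 1)) (k : Fin r) :
    (j.succAbove k : ℕ) = if (k : ℕ) < j then (k : ℕ) else (k : ℕ) + 1 := by
  rw [Fin.succAbove]
  split_ifs <;> simp_all [Fin.lt_def]

section Toeplitz

variable (c : ℕ → ℂ)

lemma det_Qmat (s : ℕ) : (Qmat c s).det = c 1 ^ s := by
  have hlower : (Qmat c s).BlockTriangular OrderDual.toDual := fun i j (hij : (i : ℕ) < j) =>
    if_neg (by omega)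
  simp [det_of_isLowerTriangular _ hlower, Qmat]

lemma Qmat_mulVec_apply {s : ℕ} (f : ℕ → ℂ) (i : Fin s) :
    (Qmat c s *ᵥ fun k => f k) i = ∑ j ∈ range (i + 1), c (i + 1 - j) * f j := by
  simp only [mulVec, dotProduct, Qmat, ite_mul, zero_mul]
  rw [Fin.sum_univ_eq_sum_range (fun j => if j ≤ (i : ℕ) then c (i + 1 - j) * f j else 0) s,
    ← sum_filter]
  congr 1
  ext j
  simp only [mem_filter, mem_range]
  omega

/-- Deleting the last row and the `j`-th column of `M0 c (r + 1)` leaves a block lower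
triangular matrix with diagonal blocks `M0 c j` and `Qmat c (r - j)`. -/
lemma det_M0_submatrix_castSucc_succAbove (r : ℕ) (j : Fin (r + 1)) :
    ((M0 c (r + 1)).submatrix Fin.castSucc j.succAbove).det = pm c j * c 1 ^ (r - j) := by
  have hj : (j : ℕ) ≤ r := j.is_le
  let e : Fin j ⊕ Fin (r - j) ≃ Fin r := finSumFinEquiv.trans (finCongr (by omega))
  have he_inl (b : Fin j) : (e (Sum.inl b) : ℕ) = b := by simp [e]
  have he_inr (a : Fin (r - j)) : (e (Sum.inr a) : ℕ) = j + a := by simp [e]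
  have hblocks : ((M0 c (r + 1)).submatrix Fin.castSucc j.succAbove).submatrix e e =
      fromBlocks (M0 c j) 0
        (of fun (a : Fin (r - j)) (b : Fin j) =>
          if (b : ℕ) ≤ j + a + 1 then c (j + a + 2 - b) else 0)
        (Qmat c (r - j)) := by
    ext (a | a) (b | b) <;>
      simp only [submatrix_apply, fromBlocks, of_apply, Sum.elim_inl, Sum.elim_inr, M0, Qmat,
        Matrix.zero_apply, Fin.val_castSucc, Fin.val_succAbove_eq_ite, he_inl, he_inr] <;>
      split_ifs <;> first | rfl | omega | (congr 1; omega)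
  rw [← det_submatrix_equiv_self e, hblocks, det_fromBlocks_zero₁₂, det_Qmat, pm]

lemma pm_succ (r : ℕ) :
    pm c (r + 1) =
      ∑ j : Fin (r + 1), (-1) ^ (r + j : ℕ) * c (r + 2 - j) * (pm c j * c 1 ^ (r - j)) := by
  rw [pm, det_succ_row _ (Fin.last r)]
  refine sum_congr rfl fun j _ => ?_
  rw [Fin.succAbove_last, det_M0_submatrix_castSucc_succAbove, M0, Fin.val_last,
    if_pos (by omega)]

variable {c}

lemma sum_range_mul_neg_one_pow_mul_pm (hc1 : c 1 = 1) (r : ℕ) :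
    ∑ j ∈ range (r + 2), c (r + 2 - j) * ((-1) ^ j * pm c j) = 0 := by
  have hsign (j : ℕ) : (-1 : ℂ) ^ (r + 1) * (-1) ^ (r + j) = -(-1) ^ j := by
    rw [← pow_add, show r + 1 + (r + j) = 2 * r + j + 1 by ring, pow_succ, pow_add, pow_mul]
    norm_num
  rw [sum_range_succ, show r + 2 - (r + 1) = 1 by omega, hc1, one_mul, pm_succ,
    Fin.sum_univ_eq_sum_range (fun j => (-1) ^ (r + j) * c (r + 2 - j) * (pm c j * c 1 ^ (r - j))),
    mul_sum, ← sum_add_distrib]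
  refine sum_eq_zero fun j _ => ?_
  rw [hc1, one_pow, mul_one]
  linear_combination (c (r + 2 - j) * pm c j) * hsign j

lemma Qmat_mulVec_neg_one_pow_mul_pm (hc1 : c 1 = 1) (s : ℕ) :
    Qmat c s *ᵥ (fun k : Fin s => (-1) ^ (k : ℕ) * pm c (k + 1)) =
      fun i : Fin s => c ((i : ℕ) + 2) := by
  funext i
  have h := sum_range_mul_neg_one_pow_mul_pm hc1 i
  rw [sum_range_succ', Nat.sub_zero, pow_zero, pm, det_fin_zero] at h
  rw [Qmat_mulVec_apply c (fun k => (-1) ^ k * pm c (k + 1))]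
  have hidx (x : ℕ) : (i : ℕ) + 2 - (x + 1) = i + 1 - x := by omega
  simp only [hidx, pow_succ, neg_mul, mul_neg, sum_neg_distrib, mul_one] at h
  linear_combination -h

end Toeplitz

theorem stmt1_general (n : ℕ) (c : ℕ → ℂ) (hc1 : c 1 = 1) :
    ∀ k : Fin (n - 1),
      ((Qmat c (n - 1))⁻¹ *ᵥ fun i : Fin (n - 1) => c ((i : ℕ) + 2)) k
        = (-1 : ℂ) ^ (k : ℕ) * pm c ((k : ℕ) + 1) := by
  intro k
  let _ := (Qmat c (n - 1)).invertibleOfIsUnitDet (by simp [det_Qmat, hc1])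
  rw [inv_mulVec_eq_vec (Qmat_mulVec_neg_one_pow_mul_pm hc1 (n - 1)).symm]

/-- Property 2: the k-th entry (1-based) of `Q⁻¹ v`, `v = (c 2, ..., c n)`, is
`(-1)^(k+1) m_k`; 0-based: entry k is `(-1)^k m_(k+1)`. -/
theorem stmt1 (n : ℕ) (hn : 2 ≤ n) (c : ℕ → ℂ) (hc1 : c 1 = 1) :
    ∀ k : Fin (n - 1),
      ((Qmat c (n - 1))⁻¹ *ᵥ fun i : Fin (n - 1) => c ((i : ℕ) + 2)) k
        = (-1 : ℂ) ^ (k : ℕ) * pm c ((k : ℕ) + 1) :=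
  stmt1_general n c hc1
end

section
/- With c_1 = 1, the determinant of the (n-2)×(n-2) matrix X obtained from Q^{-1} by deleting its first row and last column equals (-1)^n c_{n-1}; in particular X is invertible whenever c_{n-1} ≠ 0. -/
open Matrix

lemma Qmat_det_one (c : ℕ → ℂ) (hc1 : c 1 = 1) (s : ℕ) : (Qmat c s).det = 1 := by
  have h : (Qmat c s).BlockTriangular OrderDual.toDual := by
    intro i j hij
    have hij' : (i : ℕ) < (j : ℕ) := hij
    simp only [Qmat]
    rw [if_neg]
    omega
  rw [Matrix.det_of_lowerTriangular _ h]
  have he : ∀ i : Fin s, Qmat c s i i = 1 := by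
    intro i; simp [Qmat, hc1]
  simp [he]

lemma key (c : ℕ → ℂ) (hc1 : c 1 = 1) (m : ℕ)
    (X : Matrix (Fin m) (Fin m) ℂ)
    (hX : ∀ i j : Fin m, X i j = (Qmat c (m + 1))⁻¹ ⟨(i : ℕ) + 1, by omega⟩ ⟨(j : ℕ), by omega⟩) :
    X.det = (-1 : ℂ) ^ m * c (m + 1) := by
  set Q := Qmat c (m + 1) with hQ
  have hdet : Q.det = 1 := Qmat_det_one c hc1 (m + 1)
  have hu : IsUnit Q.det := by rw [hdet]; exact isUnit_one
  set B := Q⁻¹ with hB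
  have hBdet : B.det = 1 := by
    rw [hB, Matrix.det_nonsing_inv, hdet, Ring.inverse_one]
  have hadj : B.adjugate = Q := by
    have h1 : B⁻¹ = Q := Matrix.nonsing_inv_nonsing_inv Q hu
    have h2 : B⁻¹ = Ring.inverse B.det • B.adjugate := Matrix.inv_def B
    rw [hBdet, Ring.inverse_one, one_smul] at h2
    rw [← h2, h1]
  have hXsub : X = B.submatrix (Fin.succAbove 0) (Fin.succAbove (Fin.last m)) := by
    ext i j
    rw [hX i j]
    simp only [Matrix.submatrix_apply]
    have e1 : Fin.succAbove (0 : Fin (m + 1)) i = ⟨(i : ℕ) + 1, by omega⟩ := by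
      apply Fin.ext
      simp [Fin.succAbove, Fin.lt_def]
    have e2 : Fin.succAbove (Fin.last m) j = ⟨(j : ℕ), by omega⟩ := by
      apply Fin.ext
      simp [Fin.succAbove, Fin.lt_def]
    rw [e1, e2]
  have hcof := Matrix.adjugate_fin_succ_eq_det_submatrix B (Fin.last m) 0
  rw [hadj] at hcof
  have hQent : Q (Fin.last m) 0 = c (m + 1) := by
    simp [hQ, Qmat, Fin.last]
  rw [hQent] at hcof
  have hvals : (((0 : Fin (m+1)) : ℕ) + ((Fin.last m) : ℕ)) = m := by simp
  rw [hvals] at hcof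
  rw [hXsub, hcof, ← mul_assoc, ← pow_add, ← two_mul, pow_mul, neg_one_sq, one_pow, one_mul]

/-- Property 3: the matrix `X` obtained from `Q⁻¹` by deleting its first row and last
column has determinant `(-1)^n * c (n-1)`; in particular it is invertible if
`c (n-1) ≠ 0`. -/
theorem stmt2 (n : ℕ) (hn : 3 ≤ n) (c : ℕ → ℂ) (hc1 : c 1 = 1)
    (hc : ∀ k, 2 ≤ k → k ≤ n - 1 → c k ≠ 0)
    (X : Matrix (Fin (n - 2)) (Fin (n - 2)) ℂ)
    (hX : ∀ i j : Fin (n - 2),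
      X i j = (Qmat c (n - 1))⁻¹ ⟨(i : ℕ) + 1, by have := i.isLt; omega⟩
                                  ⟨(j : ℕ), by have := j.isLt; omega⟩) :
    X.det = (-1 : ℂ) ^ n * c (n - 1) ∧ (c (n - 1) ≠ 0 → IsUnit X) := by
  obtain ⟨m, hm⟩ : ∃ m, n - 2 = m := ⟨n - 2, rfl⟩
  have hm1 : n - 1 = m + 1 := by omega
  have hsub : Qmat c (n - 1) = (Qmat c (m + 1)).submatrix (finCongr hm1) (finCongr hm1) := by
    ext i j; simp [Qmat]
  have hinv : (Qmat c (n - 1))⁻¹ =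
      ((Qmat c (m + 1))⁻¹).submatrix (finCongr hm1) (finCongr hm1) := by
    rw [hsub, Matrix.inv_submatrix_equiv]
  have hdet' : (X.submatrix (finCongr hm.symm) (finCongr hm.symm)).det
      = (-1 : ℂ) ^ m * c (m + 1) := by
    apply key c hc1 m
    intro i j
    rw [Matrix.submatrix_apply, hX, hinv]
    rfl
  rw [Matrix.det_submatrix_equiv_self] at hdet'
  have hXdet : X.det = (-1 : ℂ) ^ n * c (n - 1) := by
    have hcc : c (m + 1) = c (n - 1) := by rw [hm1]
    have hn2 : n = m + 2 := by omega
    rw [hdet', hcc, hn2, pow_add, neg_one_sq, mul_one]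
  refine ⟨hXdet, fun hne => ?_⟩
  rw [Matrix.isUnit_iff_isUnit_det, hXdet]
  apply isUnit_iff_ne_zero.mpr
  exact mul_ne_zero (pow_ne_zero _ (by norm_num)) hne
end
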